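/- With P_n(x;q) as above, the coefficient a_{n;k}(q) of (−1)^k x^{n−2k} in P_n(x;q) is given by a_{n;k} = Σ q^{n(n+1)/2 − c(j₁,…,j_k)}, where the sum runs over all sequences 1 ≤ j₁ ≪ j₂ ≪ ⋯ ≪ j_k ≤ n−1 (where i ≪ j means i < j − 1) and c(j₁,…,j_k) = Σ_{r=1}^k (2j_r + 1). -/

import Mathlib

/-!
Splitting the sparse subsets of `{1, …, n + 1}` according to whether they contain `n + 1` gives
`a_{n+2;k+1} = q^{n+2} a_{n+1;k+1} + a_{n;k}`, which is the three-term recurrence read off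
coefficientwise. The truncated subtraction in the exponent `n(n+1)/2 - c(s)` is harmless: for
sparse `s ⊆ {1, …, n - 1}` the sets `s` and `s + 1` are disjoint subsets of `{1, …, n}`, so
`c(s) = ∑_{j ∈ s ∪ (s + 1)} j ≤ n(n+1)/2`, and the same disjointness gives `2|s| ≤ n`, whence
`a_{n;k} = 0` for `k > n/2`.
-/

open Polynomial Finset

def triangle (n : ℕ) : ℕ := n * (n + 1) / 2

theorem triangle_succ (n : ℕ) : triangle (n + 1) = triangle n + (n + 1) := by
  rw [triangle, triangle, show (n + 1) * (n + 1 + 1) = n * (n + 1) + (n + 1) * 2 by ring,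
    Nat.add_mul_div_right _ _ two_pos]

theorem sum_Icc_one_id (n : ℕ) : ∑ i ∈ Icc 1 n, i = triangle n := by
  induction n with
  | zero => rfl
  | succ n ih => rw [sum_Icc_succ_top (by omega), ih, triangle_succ]

-- reducible, so that `filter` elaborates with the same decidability instance as the statement
abbrev Sparse (s : Finset ℕ) : Prop := ∀ i ∈ s, ∀ j ∈ s, i < j → i + 1 < j

namespace Sparse

variable {s : Finset ℕ} {n : ℕ}

theorem disjoint_map_succ (hs : Sparse s) : Disjoint s (s.map (addRightEmbedding 1)) := by
  rw [disjoint_left]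
  intro j hj hj'
  obtain ⟨i, hi, rfl⟩ := mem_map.mp hj'
  simpa using hs i hi (i + 1) hj (by simp)

theorem union_map_succ_subset (hsub : s ⊆ Icc 1 (n - 1)) :
    s ∪ s.map (addRightEmbedding 1) ⊆ Icc 1 n := by
  intro j hj
  rcases mem_union.mp hj with hj | hj
  · have := mem_Icc.mp (hsub hj); simp only [mem_Icc]; omega
  · obtain ⟨i, hi, rfl⟩ := mem_map.mp hj
    have := mem_Icc.mp (hsub hi); simp only [addRightEmbedding_apply, mem_Icc]; omega

theorem two_mul_card_le (hs : Sparse s) (hsub : s ⊆ Icc 1 (n - 1)) : 2 * s.card ≤ n := by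
  have := card_le_card (union_map_succ_subset hsub)
  rwa [card_union_of_disjoint hs.disjoint_map_succ, card_map, Nat.card_Icc, ← two_mul,
    Nat.add_sub_cancel] at this

theorem sum_two_mul_add_one_le (hs : Sparse s) (hsub : s ⊆ Icc 1 (n - 1)) :
    ∑ j ∈ s, (2 * j + 1) ≤ triangle n := calc
  ∑ j ∈ s, (2 * j + 1) = ∑ j ∈ s ∪ s.map (addRightEmbedding 1), j := by
    rw [sum_union hs.disjoint_map_succ, sum_map, ← sum_add_distrib]
    exact sum_congr rfl fun j _ => by simp only [addRightEmbedding_apply]; ring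
  _ ≤ ∑ j ∈ Icc 1 n, j := sum_le_sum_of_subset (union_map_succ_subset hsub)
  _ = triangle n := sum_Icc_one_id n

end Sparse

def sparseSubsets (n k : ℕ) : Finset (Finset ℕ) :=
  (Icc 1 (n - 1)).powerset.filter (fun s => s.card = k ∧ Sparse s)

theorem mem_sparseSubsets {n k : ℕ} {s : Finset ℕ} :
    s ∈ sparseSubsets n k ↔ s ⊆ Icc 1 (n - 1) ∧ s.card = k ∧ Sparse s := by
  rw [sparseSubsets, mem_filter, mem_powerset]

theorem sparseSubsets_eq_empty {n k : ℕ} (hk : n / 2 < k) : sparseSubsets n k = ∅ := by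
  refine eq_empty_iff_forall_notMem.mpr fun s hs => ?_
  obtain ⟨hsub, rfl, hsparse⟩ := mem_sparseSubsets.mp hs
  have := hsparse.two_mul_card_le hsub
  omega

theorem sparseSubsets_zero (n : ℕ) : sparseSubsets n 0 = {∅} := by
  ext s
  simp only [mem_sparseSubsets, card_eq_zero, mem_singleton]
  constructor
  · exact fun h => h.2.1
  · rintro rfl
    exact ⟨empty_subset _, rfl, fun i hi => absurd hi (notMem_empty i)⟩

theorem lt_of_mem_sparseSubsets {n k j : ℕ} {s : Finset ℕ} (hs : s ∈ sparseSubsets n k)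
    (hj : j ∈ s) : j < n := by
  have := mem_Icc.mp ((mem_sparseSubsets.mp hs).1 hj); omega

theorem mem_sparseSubsets_succ_iff {n k : ℕ} {s : Finset ℕ} :
    s ∈ sparseSubsets (n + 1) k ↔ s ∈ sparseSubsets (n + 2) k ∧ n + 1 ∉ s := by
  simp only [mem_sparseSubsets]
  constructor
  · rintro ⟨hsub, hk, hs⟩
    refine ⟨⟨hsub.trans (Icc_subset_Icc_right (by omega)), hk, hs⟩, fun h => ?_⟩
    have := mem_Icc.mp (hsub h); omega
  · rintro ⟨⟨hsub, hk, hs⟩, hn⟩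
    refine ⟨fun j hj => ?_, hk, hs⟩
    have := mem_Icc.mp (hsub hj)
    have : j ≠ n + 1 := by rintro rfl; exact hn hj
    simp only [mem_Icc]; omega

theorem insert_mem_sparseSubsets {n k : ℕ} {t : Finset ℕ} (ht : t ∈ sparseSubsets n k) :
    insert (n + 1) t ∈ sparseSubsets (n + 2) (k + 1) := by
  have hlt : ∀ j ∈ t, j < n := fun j => lt_of_mem_sparseSubsets ht
  obtain ⟨hsub, hk, hs⟩ := mem_sparseSubsets.mp ht
  have hnotMem : n + 1 ∉ t := fun h => by have := hlt _ h; omega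
  refine mem_sparseSubsets.mpr
    ⟨insert_subset (by simp) (hsub.trans (Icc_subset_Icc_right (by omega))),
      by rw [card_insert_of_notMem hnotMem, hk], ?_⟩
  intro i hi j hj hij
  rcases mem_insert.mp hi with rfl | hi <;> rcases mem_insert.mp hj with rfl | hj
  · omega
  · have := hlt j hj; omega
  · have := hlt i hi; omega
  · exact hs i hi j hj hij

theorem erase_mem_sparseSubsets {n k : ℕ} {s : Finset ℕ}
    (hs : s ∈ sparseSubsets (n + 2) (k + 1)) (hn : n + 1 ∈ s) :
    s.erase (n + 1) ∈ sparseSubsets n k := by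
  obtain ⟨hsub, hk, hsparse⟩ := mem_sparseSubsets.mp hs
  refine mem_sparseSubsets.mpr ⟨fun j hj => ?_, by rw [card_erase_of_mem hn, hk]; rfl,
    fun i hi j hj => hsparse i (mem_of_mem_erase hi) j (mem_of_mem_erase hj)⟩
  obtain ⟨hne, hjs⟩ := mem_erase.mp hj
  have := mem_Icc.mp (hsub hjs)
  have : j ≠ n := by rintro rfl; simpa using hsparse j hjs (j + 1) hn (by omega)
  simp only [mem_Icc]; omega

noncomputable def tridiagCoeff (n k : ℕ) : ℤ[X] :=
  ∑ s ∈ sparseSubsets n k, X ^ (triangle n - ∑ j ∈ s, (2 * j + 1))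

theorem tridiagCoeff_eq_zero {n k : ℕ} (hk : n / 2 < k) : tridiagCoeff n k = 0 := by
  rw [tridiagCoeff, sparseSubsets_eq_empty hk, sum_empty]

theorem tridiagCoeff_zero (n : ℕ) : tridiagCoeff n 0 = X ^ triangle n := by
  simp [tridiagCoeff, sparseSubsets_zero]

theorem tridiagCoeff_add_two_zero (n : ℕ) :
    tridiagCoeff (n + 2) 0 = X ^ (n + 2) * tridiagCoeff (n + 1) 0 := by
  rw [tridiagCoeff_zero, tridiagCoeff_zero, ← pow_add, triangle_succ (n + 1), add_comm]

theorem sum_sparseSubsets_add_two_filter_notMem (n k : ℕ) :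
    ∑ s ∈ sparseSubsets (n + 2) k with n + 1 ∉ s, X ^ (triangle (n + 2) - ∑ j ∈ s, (2 * j + 1))
      = X ^ (n + 2) * tridiagCoeff (n + 1) k := by
  have hfilter : {s ∈ sparseSubsets (n + 2) k | n + 1 ∉ s} = sparseSubsets (n + 1) k := by
    ext s; rw [mem_filter, mem_sparseSubsets_succ_iff (n := n)]
  rw [hfilter, tridiagCoeff, mul_sum]
  refine sum_congr rfl fun s hs => ?_
  obtain ⟨hsub, -, hsparse⟩ := mem_sparseSubsets.mp hs
  have hle := hsparse.sum_two_mul_add_one_le hsub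
  have htri : triangle (n + 2) = triangle (n + 1) + (n + 2) := triangle_succ (n + 1)
  rw [← pow_add]
  congr 1
  omega

theorem sum_sparseSubsets_add_two_filter_mem (n k : ℕ) :
    ∑ s ∈ sparseSubsets (n + 2) (k + 1) with n + 1 ∈ s,
      X ^ (triangle (n + 2) - ∑ j ∈ s, (2 * j + 1)) = tridiagCoeff n k := by
  refine sum_nbij' (fun s => s.erase (n + 1)) (insert (n + 1))
    (fun s hs => erase_mem_sparseSubsets (mem_filter.mp hs).1 (mem_filter.mp hs).2)
    (fun t ht => mem_filter.mpr ⟨insert_mem_sparseSubsets ht, mem_insert_self _ _⟩)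
    (fun s hs => insert_erase (mem_filter.mp hs).2)
    (fun t ht => erase_insert fun h => by have := lt_of_mem_sparseSubsets ht h; omega)
    (fun s hs => ?_)
  have hsum := sum_erase_add s (fun j => 2 * j + 1) (mem_filter.mp hs).2
  have htri : triangle (n + 2) = triangle n + (n + 1) + (n + 2) := by
    rw [← triangle_succ, ← triangle_succ]
  congr 1
  omega

theorem tridiagCoeff_add_two_succ (n k : ℕ) :
    tridiagCoeff (n + 2) (k + 1) =
      X ^ (n + 2) * tridiagCoeff (n + 1) (k + 1) + tridiagCoeff n k := by
  rw [tridiagCoeff, ← sum_filter_add_sum_filter_not _ (fun s => n + 1 ∈ s), add_comm,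
    sum_sparseSubsets_add_two_filter_notMem, sum_sparseSubsets_add_two_filter_mem]

noncomputable def tridiagTerm (n k : ℕ) : ℤ[X][X] :=
  (-1) ^ k * C (tridiagCoeff n k) * X ^ (n - 2 * k)

theorem tridiagTerm_add_two_zero (n : ℕ) :
    tridiagTerm (n + 2) 0 = C (X ^ (n + 2)) * X * tridiagTerm (n + 1) 0 := by
  simp only [tridiagTerm, tridiagCoeff_add_two_zero, map_mul, pow_zero, one_mul, mul_zero,
    Nat.sub_zero, pow_succ X (n + 1)]
  ring

theorem tridiagTerm_add_two_succ (n k : ℕ) :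
    tridiagTerm (n + 2) (k + 1) =
      C (X ^ (n + 2)) * X * tridiagTerm (n + 1) (k + 1) - tridiagTerm n k := by
  have hshift : C (tridiagCoeff (n + 1) (k + 1)) * X ^ (n - 2 * k) =
      C (tridiagCoeff (n + 1) (k + 1)) * X * X ^ (n + 1 - 2 * (k + 1)) := by
    -- if `n < 2 * k + 1` the exponent on the right truncates, but then `a_{n+1;k+1} = 0`
    by_cases hk : 2 * k + 1 ≤ n
    · rw [mul_assoc, ← pow_succ', show n - 2 * k = n + 1 - 2 * (k + 1) + 1 by omega]
    · rw [tridiagCoeff_eq_zero (by omega), map_zero, zero_mul, zero_mul, zero_mul]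
  have hexp : n + 2 - 2 * (k + 1) = n - 2 * k := by omega
  simp only [tridiagTerm, tridiagCoeff_add_two_succ, map_add, map_mul, hexp]
  linear_combination (-1 : ℤ[X][X]) ^ (k + 1) * C (X ^ (n + 2)) * hshift

noncomputable def tridiagSum (n : ℕ) : ℤ[X][X] :=
  ∑ k ∈ range (n / 2 + 1), tridiagTerm n k

theorem sum_range_tridiagTerm {n N : ℕ} (hN : n / 2 < N) :
    ∑ k ∈ range N, tridiagTerm n k = tridiagSum n := by
  refine (sum_subset (range_subset_range.mpr (by omega)) fun k _ hk => ?_).symm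
  rw [tridiagTerm, tridiagCoeff_eq_zero (by simpa using hk), map_zero, mul_zero, zero_mul]

theorem tridiagSum_add_two (n : ℕ) :
    tridiagSum (n + 2) = C (X ^ (n + 2)) * X * tridiagSum (n + 1) - tridiagSum n := by
  rw [tridiagSum, show (n + 2) / 2 + 1 = n / 2 + 1 + 1 by omega, sum_range_succ',
    ← sum_range_tridiagTerm (show (n + 1) / 2 < n / 2 + 1 + 1 by omega),
    sum_range_succ' (tridiagTerm (n + 1)), tridiagSum]
  simp only [tridiagTerm_add_two_succ, tridiagTerm_add_two_zero, sum_sub_distrib, mul_add,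
    mul_sum]
  ring

theorem eq_tridiagSum (P : ℕ → ℤ[X][X]) (h0 : P 0 = 1) (h1 : P 1 = C X * X)
    (hrec : ∀ n, P (n + 2) = C (X ^ (n + 2)) * X * P (n + 1) - P n) (n : ℕ) :
    P n = tridiagSum n := by
  induction n using Nat.twoStepInduction with
  | zero => simp [h0, tridiagSum, tridiagTerm, tridiagCoeff_zero, triangle]
  | one => simp [h1, tridiagSum, tridiagTerm, tridiagCoeff_zero, triangle]
  | more n ih₀ ih₁ => rw [hrec, ih₀, ih₁, tridiagSum_add_two]

/-- Explicit coefficient formula for the tridiagonal polynomials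
P₀ = 1, P₁ = qx, Pₙ = qⁿ x P_{n−1} − P_{n−2} over ℤ[q] (x outer variable,
q inner variable):
Pₙ = Σ_{k=0}^{⌊n/2⌋} (−1)ᵏ a_{n;k}(q) x^{n−2k}, where
a_{n;k} = Σ q^{n(n+1)/2 − c(j₁,…,j_k)}, the sum over all k-element subsets
s ⊆ {1,…,n−1} with no two elements equal or adjacent (i ≪ j, i.e. i < j−1),
and c(s) = Σ_{j ∈ s} (2j+1). -/
theorem tridiagonal_poly_coeff_formula
    (P : ℕ → Polynomial (Polynomial ℤ))
    (h0 : P 0 = 1) (h1 : P 1 = C X * X)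
    (hrec : ∀ n : ℕ, P (n + 2) = C (X ^ (n + 2)) * X * P (n + 1) - P n) :
    ∀ n : ℕ, P n = ∑ k ∈ Finset.range (n / 2 + 1),
      (-1) ^ k *
        C (∑ s ∈ (Finset.Icc 1 (n - 1)).powerset.filter
              (fun s => s.card = k ∧ ∀ i ∈ s, ∀ j ∈ s, i < j → i + 1 < j),
            (X : Polynomial ℤ) ^ (n * (n + 1) / 2 - ∑ j ∈ s, (2 * j + 1))) *
        X ^ (n - 2 * k) :=
  eq_tridiagSum P h0 h1 hrec
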